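/- arXiv:2507.12742 — 4 statements merged into one kernel-verified Lean document; each statement's English description precedes it below -/
import Mathlib

section
/- Let φ be a uniformly convex N-function with constants c_uc ≤ C_uc, i.e. c_uc·(φ'(s)−φ'(t))/(s−t) ≤ φ'(s)/s ≤ C_uc·(φ'(s)−φ'(t))/(s−t) for all s > 0, t ∈ [0,s). Then for each r ≥ 0 the shifted function φ_r(t) := ∫₀ᵗ φ'_r(s) ds with φ'_r(s) := φ'(max{r,s})·s/max{r,s} is again a uniformly convex N-function, with uniform convexity constants depending only on c_uc and C_uc and independent of the shift r. -/
set_option maxHeartbeats 1000000 in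
/-- The shifted N-functions φ_r of a uniformly convex N-function φ are again
uniformly convex N-functions, with constants independent of the shift r. -/
theorem shifted_nfunction_uniformly_convex
    (φ φ' : ℝ → ℝ)
    (hrep : ∀ t ≥ 0, φ t = ∫ s in (0:ℝ)..t, φ' s)
    (hmono : MonotoneOn φ' (Set.Ici 0))
    (hrc : ∀ t ≥ 0, ContinuousWithinAt φ' (Set.Ici t) t)
    (h0 : φ' 0 = 0)
    (hpos : ∀ t > 0, φ' t > 0)
    (hinf : Filter.Tendsto φ' Filter.atTop Filter.atTop)
    (c_uc C_uc : ℝ) (hc : 0 < c_uc) (hcC : c_uc ≤ C_uc)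
    (huc : ∀ s > 0, ∀ t, 0 ≤ t → t < s →
      c_uc * ((φ' s - φ' t) / (s - t)) ≤ φ' s / s ∧
      φ' s / s ≤ C_uc * ((φ' s - φ' t) / (s - t))) :
    ∃ c' C' : ℝ, 0 < c' ∧ c' ≤ C' ∧
      ∀ r ≥ 0,
        -- the shifted density  φ'_r(s) = φ'(max{r,s})·s/max{r,s}
        (MonotoneOn (fun s => φ' (max r s) * s / max r s) (Set.Ici 0)) ∧
        (φ' (max r 0) * 0 / max r 0 = 0) ∧
        (∀ t > 0, φ' (max r t) * t / max r t > 0) ∧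
        (Filter.Tendsto (fun s => φ' (max r s) * s / max r s)
          Filter.atTop Filter.atTop) ∧
        -- uniform convexity of the shifted density with constants c', C'
        (∀ s > 0, ∀ t, 0 ≤ t → t < s →
          c' * ((φ' (max r s) * s / max r s - φ' (max r t) * t / max r t) / (s - t))
              ≤ (φ' (max r s) * s / max r s) / s ∧
          (φ' (max r s) * s / max r s) / s
              ≤ C' * ((φ' (max r s) * s / max r s - φ' (max r t) * t / max r t) / (s - t))) := by
  -- nonnegativity of the density
  have hnn : ∀ x, 0 ≤ x → 0 ≤ φ' x := by
    intro x hx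
    have := hmono (Set.mem_Ici.2 (le_refl (0:ℝ))) (Set.mem_Ici.2 hx) hx
    rwa [h0] at this
  -- c_uc ≤ 1 and 1 ≤ C_uc
  have hf1 : 0 < φ' 1 := hpos 1 one_pos
  have huc1 := huc 1 one_pos 0 le_rfl one_pos
  have hc1 : c_uc ≤ 1 := by
    have := huc1.1
    simp only [h0, sub_zero, div_one] at this
    nlinarith
  have hC1 : 1 ≤ C_uc := by
    have := huc1.2
    simp only [h0, sub_zero, div_one] at this
    nlinarith
  refine ⟨c_uc / 2, 2 * C_uc / c_uc, by positivity, ?_, ?_⟩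
  · -- c' ≤ C'
    have h2 : (2:ℝ) ≤ 2 * C_uc / c_uc := by
      rw [le_div_iff₀ hc]
      nlinarith
    linarith
  intro r hr
  -- simplification lemmas for the shifted density
  have key_ge : ∀ x, 0 ≤ x → r ≤ x → φ' (max r x) * x / max r x = φ' x := by
    intro x hx hrx
    rcases hx.eq_or_lt with h | h
    · subst h
      simp [h0]
    · rw [max_eq_right hrx, mul_div_assoc, div_self h.ne', mul_one]
  have key_le : ∀ x, x ≤ r → φ' (max r x) * x / max r x = φ' r * x / r := by
    intro x hxr
    rw [max_eq_left hxr]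
  have hψnn : ∀ x, 0 ≤ x → 0 ≤ φ' (max r x) * x / max r x := by
    intro x hx
    apply div_nonneg (mul_nonneg (hnn _ (le_trans hr (le_max_left _ _))) hx)
      (le_trans hr (le_max_left _ _))
  refine ⟨?_, by simp, ?_, ?_, ?_⟩
  · -- monotone
    intro a ha b hb hab
    simp only [Set.mem_Ici] at ha hb
    dsimp only
    rcases ha.eq_or_lt with h | ha'
    · simp only [← h]
      simpa using hψnn b hb
    · rcases le_or_gt b r with hbr | hrb
      · -- both on linear part
        have hr' : 0 < r := lt_of_lt_of_le (lt_of_lt_of_le ha' hab) hbr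
        rw [key_le a (le_trans hab hbr), key_le b hbr,
          div_le_div_iff_of_pos_right hr']
        exact mul_le_mul_of_nonneg_left hab (hnn r hr'.le)
      · rcases le_or_gt a r with har | hra
        · -- a ≤ r < b
          have hr' : 0 < r := lt_of_lt_of_le ha' har
          have hb' : 0 < b := lt_of_lt_of_le ha' hab
          rw [key_le a har, key_ge b hb hrb.le]
          have h1 : φ' r * a / r ≤ φ' r := by
            rw [mul_div_assoc]
            calc φ' r * (a / r) ≤ φ' r * 1 := by
                  apply mul_le_mul_of_nonneg_left _ (hnn r hr'.le)
                  rw [div_le_one hr']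
                  exact har
              _ = φ' r := mul_one _
          have h2 : φ' r ≤ φ' b :=
            hmono (Set.mem_Ici.2 hr'.le) (Set.mem_Ici.2 hb'.le) hrb.le
          linarith
        · -- r < a ≤ b
          rw [key_ge a ha hra.le, key_ge b hb (hra.le.trans hab)]
          exact hmono (Set.mem_Ici.2 ha) (Set.mem_Ici.2 hb) hab
  · -- positivity
    intro t ht
    rcases le_or_gt t r with htr | hrt
    · have hr' : 0 < r := lt_of_lt_of_le ht htr
      rw [key_le t htr]
      have := hpos r hr'
      positivity
    · rw [key_ge t ht.le hrt.le]
      exact hpos t ht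
  · -- tendsto atTop
    apply hinf.congr'
    filter_upwards [Filter.eventually_ge_atTop (max r 1)] with x hx
    have hrx : r ≤ x := le_trans (le_max_left _ _) hx
    have hx1 : (1:ℝ) ≤ x := le_trans (le_max_right _ _) hx
    exact (key_ge x (by linarith) hrx).symm
  · -- uniform convexity
    intro s hs t ht hts
    have hst : (0:ℝ) < s - t := sub_pos.2 hts
    rcases le_or_gt s r with hsr | hrs
    · -- Case B : t < s ≤ r, linear part
      have hr' : 0 < r := lt_of_lt_of_le hs hsr
      rw [key_le s hsr, key_le t (hts.le.trans hsr)]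
      have e1 : φ' r * s / r - φ' r * t / r = φ' r / r * (s - t) := by ring
      have e2 : φ' r / r * (s - t) / (s - t) = φ' r / r := by
        rw [mul_div_assoc, div_self hst.ne', mul_one]
      have e3 : φ' r * s / r / s = φ' r / r := by
        field_simp
      rw [e1, e2, e3]
      have hfr : 0 ≤ φ' r / r := div_nonneg (hnn r hr'.le) hr'.le
      have h2C : (2:ℝ) ≤ 2 * C_uc / c_uc := by
        rw [le_div_iff₀ hc]; nlinarith
      constructor
      · nlinarith
      · nlinarith
    · rcases le_or_gt r t with hrt | htr
      · -- Case A : r ≤ t < s, original function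
        rw [key_ge s hs.le hrs.le, key_ge t ht hrt]
        obtain ⟨hA, hB⟩ := huc s hs t ht hts
        have hQ : 0 ≤ (φ' s - φ' t) / (s - t) := by
          apply div_nonneg _ hst.le
          have := hmono (Set.mem_Ici.2 ht) (Set.mem_Ici.2 hs.le) hts.le
          linarith
        constructor
        · calc c_uc / 2 * ((φ' s - φ' t) / (s - t))
              ≤ c_uc * ((φ' s - φ' t) / (s - t)) := by nlinarith
            _ ≤ φ' s / s := hA
        · calc φ' s / s ≤ C_uc * ((φ' s - φ' t) / (s - t)) := hB
            _ ≤ 2 * C_uc / c_uc * ((φ' s - φ' t) / (s - t)) := by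
                apply mul_le_mul_of_nonneg_right _ hQ
                rw [le_div_iff₀ hc]
                nlinarith
      · -- Case C : 0 ≤ t < r < s
        have hr' : 0 < r := lt_of_le_of_lt ht htr
        rw [key_ge s hs.le hrs.le, key_le t htr.le]
        have hsr' : (0:ℝ) < s - r := sub_pos.2 hrs
        obtain ⟨hA, hB⟩ := huc s hs r hr'.le hrs
        rw [← mul_div_assoc, div_le_div_iff₀ hsr' hs] at hA
        rw [← mul_div_assoc, div_le_div_iff₀ hs hsr'] at hB
        -- hA : c_uc * (φ' s - φ' r) * s ≤ φ' s * (s - r)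
        -- hB : φ' s * (s - r) ≤ C_uc * (φ' s - φ' r) * s
        have hfs : 0 < φ' s := hpos s hs
        have hfr : 0 ≤ φ' r := hnn r hr'.le
        have hmrs : φ' r ≤ φ' s :=
          hmono (Set.mem_Ici.2 hr'.le) (Set.mem_Ici.2 hs.le) hrs.le
        constructor
        · -- lower bound
          rw [← mul_div_assoc, div_le_div_iff₀ hst hs]
          have expand : c_uc / 2 * (φ' s - φ' r * t / r) * s
              = c_uc / 2 * (φ' s * r - φ' r * t) * s / r := by
            field_simp
          rw [expand, div_le_iff₀ hr']
          -- goal : c_uc/2 * (φ' s * r - φ' r * t) * s ≤ φ' s * (s - t) * r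
          have e2 : φ' r * (r * s - t * s) ≤ φ' s * (r * s - t * s) := by
            apply mul_le_mul_of_nonneg_right hmrs
            nlinarith [mul_nonneg (sub_nonneg.2 htr.le) hs.le]
          have e3 : r * s - t * s ≤ r * (s - t) := by
            nlinarith [mul_nonneg ht hsr'.le]
          have A1 : c_uc * (φ' s - φ' r) * s * r ≤ φ' s * (s - r) * r :=
            mul_le_mul_of_nonneg_right hA hr'.le
          have A2 : φ' s * (s - r) * r ≤ φ' s * (s - t) * r :=
            mul_le_mul_of_nonneg_right
              (mul_le_mul_of_nonneg_left (by linarith : s - r ≤ s - t) hfs.le)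
              hr'.le
          have A3 : c_uc * (φ' r * (r * s - t * s)) ≤ c_uc * (φ' s * (r * s - t * s)) :=
            mul_le_mul_of_nonneg_left e2 hc.le
          have A4 : c_uc * (φ' s * (r * s - t * s)) ≤ c_uc * (φ' s * (r * (s - t))) :=
            mul_le_mul_of_nonneg_left (mul_le_mul_of_nonneg_left e3 hfs.le) hc.le
          have A5 : c_uc * (φ' s * (r * (s - t))) ≤ 1 * (φ' s * (r * (s - t))) :=
            mul_le_mul_of_nonneg_right hc1
              (mul_nonneg hfs.le (mul_nonneg hr'.le hst.le))
          linarith [A1, A2, A3, A4, A5]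
        · -- upper bound
          rw [← mul_div_assoc, div_le_div_iff₀ hs hst]
          have expand : 2 * C_uc / c_uc * (φ' s - φ' r * t / r) * s
              = 2 * C_uc * (φ' s * r - φ' r * t) * s / (c_uc * r) := by
            field_simp
          rw [expand, le_div_iff₀ (mul_pos hc hr')]
          -- goal : φ' s * (s - t) * (c_uc * r) ≤ 2 * C_uc * (φ' s * r - φ' r * t) * s
          have P1 : φ' s * (s - r) * r ≤ C_uc * (φ' s - φ' r) * s * r :=
            mul_le_mul_of_nonneg_right hB hr'.le
          rcases le_or_gt ((1 - c_uc / 2) * s) r with hlam | hlam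
          · -- C1 : r close to s, so φ' r ≥ φ' s / 2
            have hlam0 : 0 ≤ (1 - c_uc / 2) * s := mul_nonneg (by linarith) hs.le
            have hlamlt : (1 - c_uc / 2) * s < s := by
              have := mul_lt_mul_of_pos_right (show 1 - c_uc / 2 < 1 by linarith) hs
              linarith
            have hX := (huc s hs ((1 - c_uc / 2) * s) hlam0 hlamlt).1
            have hden : s - (1 - c_uc / 2) * s = c_uc / 2 * s := by ring
            rw [hden, ← mul_div_assoc,
              div_le_div_iff₀ (by positivity) hs] at hX
            have hflam : φ' s / 2 ≤ φ' ((1 - c_uc / 2) * s) := by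
              have hcs : 0 < c_uc * s := mul_pos hc hs
              have h' : (φ' s - φ' ((1 - c_uc / 2) * s)) * (c_uc * s)
                  ≤ φ' s / 2 * (c_uc * s) := by linarith [hX]
              have := le_of_mul_le_mul_right h' hcs
              linarith
            have hflamr : φ' ((1 - c_uc / 2) * s) ≤ φ' r :=
              hmono (Set.mem_Ici.2 hlam0) (Set.mem_Ici.2 hr'.le) hlam
            have hfs2 : φ' s ≤ 2 * φ' r := by linarith
            have hcr : c_uc * r ≤ C_uc * s := mul_le_mul hcC hrs.le hr'.le (by linarith)
            have B2 : c_uc * (φ' s * (s - r) * r) ≤ 2 * (φ' s * (s - r) * r) :=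
              mul_le_mul_of_nonneg_right (by linarith : c_uc ≤ 2)
                (mul_nonneg (mul_nonneg hfs.le hsr'.le) hr'.le)
            have B3 : (c_uc * r) * (φ' s * (r - t)) ≤ (C_uc * s) * (φ' s * (r - t)) :=
              mul_le_mul_of_nonneg_right hcr
                (mul_nonneg hfs.le (sub_nonneg.2 htr.le))
            have B4 : φ' s * (C_uc * s * (r - t)) ≤ 2 * φ' r * (C_uc * s * (r - t)) :=
              mul_le_mul_of_nonneg_right hfs2
                (mul_nonneg (mul_nonneg (by linarith : (0:ℝ) ≤ C_uc) hs.le)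
                  (sub_nonneg.2 htr.le))
            linarith [P1, B2, B3, B4]
          · -- C2 : r far below s, s - r ≥ c_uc/2 * s
            have hgap : c_uc / 2 * s ≤ s - r := by linarith
            have D1 : 0 ≤ c_uc * (φ' s * (r * t)) := by positivity
            have D2 : φ' s * (c_uc / 2 * s) * r ≤ φ' s * (s - r) * r :=
              mul_le_mul_of_nonneg_right
                (mul_le_mul_of_nonneg_left hgap hfs.le) hr'.le
            have D3 : 0 ≤ C_uc * (φ' r * ((r - t) * s)) :=
              mul_nonneg (by linarith)
                (mul_nonneg hfr (mul_nonneg (by linarith) hs.le))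
            linarith [P1, D1, D2, D3]
end

section
/- Let φ be a uniformly convex N-function and for Q ∈ ℝ^d \ {0} define A(Q) := (φ'(|Q|)/|Q|)·Q, A(0) := 0, and F(Q) := sqrt(φ'(|Q|)/|Q|)·Q, F(0) := 0. Then there exist constants 0 < c ≤ C depending only on the uniform convexity constants of φ such that for all P, Q ∈ ℝ^d: c·|F(P) − F(Q)|² ≤ (A(P) − A(Q))·(P − Q) ≤ C·|F(P) − F(Q)|². -/
set_option maxHeartbeats 1000000

lemma interp_aux' {α m θ r : ℝ} (h1 : θ ≤ r) (h2 : -r ≤ θ)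
    (hp : α + m * r ≤ 0) (hm : α + m * (-r) ≤ 0) : α + m * θ ≤ 0 := by
  rcases le_total 0 m with h | h
  · nlinarith [mul_le_mul_of_nonneg_left h1 h]
  · nlinarith [mul_le_mul_of_nonpos_left h2 h]


lemma interp_aux {α m θ r : ℝ} (h1 : θ ≤ r) (h2 : -r ≤ θ)
    (hp : α + m * r ≤ 0) (hm : α + m * (-r) ≤ 0) : α + m * θ ≤ 0 := by
  rcases le_total 0 m with h | h
  · nlinarith [mul_le_mul_of_nonneg_left h1 h]
  · nlinarith [mul_le_mul_of_nonpos_left h2 h]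

lemma scalar_est (φ' : ℝ → ℝ)
    (hmono : MonotoneOn φ' (Set.Ici 0)) (h0 : φ' 0 = 0)
    (hpos : ∀ t > 0, φ' t > 0)
    (c_uc C_uc : ℝ) (hc : 0 < c_uc) (hcC : c_uc ≤ C_uc)
    (huc : ∀ s > 0, ∀ t, 0 ≤ t → t < s →
      c_uc * ((φ' s - φ' t) / (s - t)) ≤ φ' s / s ∧
      φ' s / s ≤ C_uc * ((φ' s - φ' t) / (s - t)))
    (x y u v : ℝ) (hy : 0 ≤ y) (hyx : y ≤ x)
    (hu0 : 0 ≤ u) (hv0 : 0 ≤ v)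
    (hu2 : u ^ 2 = x * φ' x) (hv2 : v ^ 2 = y * φ' y) :
    min (c_uc / (1 + C_uc) ^ 2) (1/2) * (u - v) ^ 2 ≤ (x - y) * (φ' x - φ' y) ∧
    (x - y) * (φ' x - φ' y) ≤ max (4 * C_uc) 3 * (u - v) ^ 2 ∧
    min (c_uc / (1 + C_uc) ^ 2) (1/2) * (u + v) ^ 2 ≤ (x + y) * (φ' x + φ' y) ∧
    (x + y) * (φ' x + φ' y) ≤ max (4 * C_uc) 3 * (u + v) ^ 2 := by
  have hx0 : 0 ≤ x := hy.trans hyx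
  have hφy0 : 0 ≤ φ' y := by
    have := hmono (Set.mem_Ici.mpr le_rfl) (Set.mem_Ici.mpr hy) hy
    linarith [this, h0.le, h0.ge]
  have hφxy : φ' y ≤ φ' x := hmono (Set.mem_Ici.mpr hy) (Set.mem_Ici.mpr hx0) hyx
  have hφx0 : 0 ≤ φ' x := hφy0.trans hφxy
  have hvu : v ≤ u := by
    by_contra hlt
    push_neg at hlt
    nlinarith [mul_le_mul hyx hφxy hφy0 hx0]
  have hCuc0 : 0 < C_uc := lt_of_lt_of_le hc hcC
  have hcmin_le : min (c_uc / (1 + C_uc) ^ 2) (1/2 : ℝ) ≤ 1/2 := min_le_right _ _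
  have hcmin_le1 : min (c_uc / (1 + C_uc) ^ 2) (1/2 : ℝ) ≤ c_uc / (1 + C_uc) ^ 2 :=
    min_le_left _ _
  have hcmin_pos : 0 < min (c_uc / (1 + C_uc) ^ 2) (1/2 : ℝ) :=
    lt_min (by positivity) (by norm_num)
  have hCmax3 : (3:ℝ) ≤ max (4 * C_uc) 3 := le_max_right _ _
  have hCmax4 : 4 * C_uc ≤ max (4 * C_uc) 3 := le_max_left _ _
  refine ⟨?_, ?_, ?_, ?_⟩
  · -- lower endpoint (same direction): cmin (u-v)^2 ≤ (x-y)(φ'x-φ'y)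
    rcases eq_or_lt_of_le hyx with heq | hlt
    · subst heq
      have huv : u = v := by
        rw [← Real.sqrt_sq hu0, ← Real.sqrt_sq hv0, hu2, hv2]
      rw [huv]
      simp
    · have hxpos : 0 < x := lt_of_le_of_lt hy hlt
      have hφxpos : 0 < φ' x := hpos x hxpos
      obtain ⟨hi, hii⟩ := huc x hxpos y hy hlt
      have hh : 0 < x - y := sub_pos.mpr hlt
      rw [← mul_div_assoc] at hi hii
      have hi' : c_uc * (φ' x - φ' y) * x ≤ φ' x * (x - y) := (div_le_div_iff₀ hh hxpos).mp hi
      have hii' : φ' x * (x - y) ≤ C_uc * (φ' x - φ' y) * x := (div_le_div_iff₀ hxpos hh).mp hii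
      have hg0 : 0 ≤ φ' x - φ' y := sub_nonneg.mpr hφxy
      have hgx0 : 0 ≤ (φ' x - φ' y) * x := mul_nonneg hg0 hx0
      have hupos : 0 < u := by
        rcases hu0.lt_or_eq with h | h
        · exact h
        · exfalso; nlinarith [mul_pos hxpos hφxpos]
      have huv2 : 0 < (u + v) ^ 2 := pow_pos (by linarith) 2
      have hD0 : 0 ≤ (x - y) * (φ' x - φ' y) := mul_nonneg hh.le hg0
      have hNup : u ^ 2 - v ^ 2 ≤ (1 + C_uc) * ((φ' x - φ' y) * x) := by
        nlinarith [mul_le_mul_of_nonneg_left hφxy hh.le]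
      have hNup0 : 0 ≤ u ^ 2 - v ^ 2 := by nlinarith [mul_nonneg (sub_nonneg.mpr hvu) (by linarith : (0:ℝ) ≤ u + v)]
      have s2 : (u ^ 2 - v ^ 2) ^ 2 ≤ ((1 + C_uc) * ((φ' x - φ' y) * x)) ^ 2 :=
        pow_le_pow_left₀ hNup0 hNup 2
      have e4 : (c_uc / (1 + C_uc) ^ 2) * ((1 + C_uc) * ((φ' x - φ' y) * x)) ^ 2
          = c_uc * ((φ' x - φ' y) * x) ^ 2 := by
        have h1C : (1 + C_uc) ≠ 0 := by positivity
        field_simp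
      have hu2' : ((x - y) * (φ' x - φ' y)) * u ^ 2 = ((x - y) * (φ' x - φ' y)) * (x * φ' x) := by
        rw [hu2]
      have s3 : c_uc * ((φ' x - φ' y) * x) ^ 2 ≤ ((x - y) * (φ' x - φ' y)) * u ^ 2 := by
        have hp := mul_le_mul_of_nonneg_right hi' hgx0
        nlinarith [hp, hu2']
      have s5 : ((x - y) * (φ' x - φ' y)) * u ^ 2 ≤ ((x - y) * (φ' x - φ' y)) * (u + v) ^ 2 :=
        mul_le_mul_of_nonneg_left (by nlinarith [mul_nonneg hu0 hv0, sq_nonneg v]) hD0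
      have key : (min (c_uc / (1 + C_uc) ^ 2) (1/2) * (u - v) ^ 2) * (u + v) ^ 2
          ≤ ((x - y) * (φ' x - φ' y)) * (u + v) ^ 2 := by
        calc (min (c_uc / (1 + C_uc) ^ 2) (1/2) * (u - v) ^ 2) * (u + v) ^ 2
            = min (c_uc / (1 + C_uc) ^ 2) (1/2) * (u ^ 2 - v ^ 2) ^ 2 := by ring
          _ ≤ min (c_uc / (1 + C_uc) ^ 2) (1/2) * ((1 + C_uc) * ((φ' x - φ' y) * x)) ^ 2 :=
              mul_le_mul_of_nonneg_left s2 hcmin_pos.le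
          _ ≤ (c_uc / (1 + C_uc) ^ 2) * ((1 + C_uc) * ((φ' x - φ' y) * x)) ^ 2 :=
              mul_le_mul_of_nonneg_right hcmin_le1 (sq_nonneg _)
          _ = c_uc * ((φ' x - φ' y) * x) ^ 2 := e4
          _ ≤ ((x - y) * (φ' x - φ' y)) * u ^ 2 := s3
          _ ≤ ((x - y) * (φ' x - φ' y)) * (u + v) ^ 2 := s5
      exact le_of_mul_le_mul_right key huv2
  · -- upper endpoint (same direction)
    rcases eq_or_lt_of_le hyx with heq | hlt
    · subst heq
      simp
      positivity
    · have hxpos : 0 < x := lt_of_le_of_lt hy hlt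
      have hφxpos : 0 < φ' x := hpos x hxpos
      obtain ⟨hi, hii⟩ := huc x hxpos y hy hlt
      have hh : 0 < x - y := sub_pos.mpr hlt
      rw [← mul_div_assoc] at hi hii
      have hii' : φ' x * (x - y) ≤ C_uc * (φ' x - φ' y) * x := (div_le_div_iff₀ hxpos hh).mp hii
      have hg0 : 0 ≤ φ' x - φ' y := sub_nonneg.mpr hφxy
      have hgx0 : 0 ≤ (φ' x - φ' y) * x := mul_nonneg hg0 hx0
      have hupos : 0 < u := by
        rcases hu0.lt_or_eq with h | h
        · exact h
        · exfalso; nlinarith [mul_pos hxpos hφxpos]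
      have huv2 : 0 < (u + v) ^ 2 := pow_pos (by linarith) 2
      have hD0 : 0 ≤ (x - y) * (φ' x - φ' y) := mul_nonneg hh.le hg0
      have s1 : (u + v) ^ 2 ≤ 4 * u ^ 2 := by
        nlinarith [mul_nonneg (sub_nonneg.mpr hvu) (by linarith : (0:ℝ) ≤ 3 * u + v)]
      have hN : (φ' x - φ' y) * x ≤ u ^ 2 - v ^ 2 := by
        nlinarith [mul_nonneg (sub_nonneg.mpr hlt.le) hφy0]
      have hN2 : ((φ' x - φ' y) * x) ^ 2 ≤ (u ^ 2 - v ^ 2) ^ 2 := pow_le_pow_left₀ hgx0 hN 2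
      have key : ((x - y) * (φ' x - φ' y)) * (u + v) ^ 2
          ≤ (max (4 * C_uc) 3 * (u - v) ^ 2) * (u + v) ^ 2 := by
        calc ((x - y) * (φ' x - φ' y)) * (u + v) ^ 2
            ≤ ((x - y) * (φ' x - φ' y)) * (4 * u ^ 2) := mul_le_mul_of_nonneg_left s1 hD0
          _ = 4 * (φ' x * (x - y)) * ((φ' x - φ' y) * x) := by rw [hu2]; ring
          _ ≤ 4 * (C_uc * (φ' x - φ' y) * x) * ((φ' x - φ' y) * x) := by
              have hp := mul_le_mul_of_nonneg_right hii' hgx0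
              nlinarith [hp]
          _ = 4 * C_uc * ((φ' x - φ' y) * x) ^ 2 := by ring
          _ ≤ 4 * C_uc * (u ^ 2 - v ^ 2) ^ 2 :=
              mul_le_mul_of_nonneg_left hN2 (by positivity)
          _ = (4 * C_uc * (u - v) ^ 2) * (u + v) ^ 2 := by ring
          _ ≤ (max (4 * C_uc) 3 * (u - v) ^ 2) * (u + v) ^ 2 :=
              mul_le_mul_of_nonneg_right
                (mul_le_mul_of_nonneg_right hCmax4 (sq_nonneg (u - v))) (sq_nonneg (u + v))
      exact le_of_mul_le_mul_right key huv2
  · -- lower endpoint (opposite direction)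
    nlinarith [mul_nonneg hx0 hφy0, mul_nonneg hy hφx0, sq_nonneg (u - v),
      mul_nonneg (sub_nonneg.mpr hcmin_le) (sq_nonneg (u + v))]
  · -- upper endpoint (opposite direction)
    nlinarith [mul_le_mul_of_nonneg_left hφxy hx0, mul_le_mul_of_nonneg_right hyx hφx0,
      mul_nonneg hu0 hv0, sq_nonneg v,
      mul_nonneg (sub_nonneg.mpr hCmax3) (sq_nonneg (u + v))]


/-- Equivalence |F(P) − F(Q)|² ≍ (A(P) − A(Q))·(P − Q) for a uniformly convex
N-function φ, with A(Q) = (φ'(|Q|)/|Q|)Q and F(Q) = √(φ'(|Q|)/|Q|)Q. -/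
theorem F_A_distance_equivalence
    (d : ℕ)
    (φ φ' : ℝ → ℝ)
    (hrep : ∀ t ≥ 0, φ t = ∫ s in (0:ℝ)..t, φ' s)
    (hmono : MonotoneOn φ' (Set.Ici 0))
    (hrc : ∀ t ≥ 0, ContinuousWithinAt φ' (Set.Ici t) t)
    (h0 : φ' 0 = 0)
    (hpos : ∀ t > 0, φ' t > 0)
    (hinf : Filter.Tendsto φ' Filter.atTop Filter.atTop)
    (c_uc C_uc : ℝ) (hc : 0 < c_uc) (hcC : c_uc ≤ C_uc)
    (huc : ∀ s > 0, ∀ t, 0 ≤ t → t < s →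
      c_uc * ((φ' s - φ' t) / (s - t)) ≤ φ' s / s ∧
      φ' s / s ≤ C_uc * ((φ' s - φ' t) / (s - t)))
    (A F : EuclideanSpace ℝ (Fin d) → EuclideanSpace ℝ (Fin d))
    (hA : ∀ Q, A Q = (φ' ‖Q‖ / ‖Q‖) • Q)
    (hF : ∀ Q, F Q = Real.sqrt (φ' ‖Q‖ / ‖Q‖) • Q) :
    ∃ c C : ℝ, 0 < c ∧ c ≤ C ∧
      ∀ P Q : EuclideanSpace ℝ (Fin d),
        c * ‖F P - F Q‖ ^ 2 ≤ (inner ℝ (A P - A Q) (P - Q) : ℝ) ∧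
        (inner ℝ (A P - A Q) (P - Q) : ℝ) ≤ C * ‖F P - F Q‖ ^ 2 := by
  have hCuc0 : 0 < C_uc := lt_of_lt_of_le hc hcC
  have main : ∀ P Q : EuclideanSpace ℝ (Fin d), ‖Q‖ ≤ ‖P‖ →
      min (c_uc / (1 + C_uc) ^ 2) (1/2) * ‖F P - F Q‖ ^ 2 ≤ (inner ℝ (A P - A Q) (P - Q) : ℝ) ∧
      (inner ℝ (A P - A Q) (P - Q) : ℝ) ≤ max (4 * C_uc) 3 * ‖F P - F Q‖ ^ 2 := by
    intro P Q hn
    have hφP0 : 0 ≤ φ' ‖P‖ := by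
      have := hmono (Set.mem_Ici.mpr le_rfl) (Set.mem_Ici.mpr (norm_nonneg P)) (norm_nonneg P)
      linarith [h0.le, h0.ge]
    have hφQ0 : 0 ≤ φ' ‖Q‖ := by
      have := hmono (Set.mem_Ici.mpr le_rfl) (Set.mem_Ici.mpr (norm_nonneg Q)) (norm_nonneg Q)
      linarith [h0.le, h0.ge]
    have hu2' : (Real.sqrt (φ' ‖P‖ / ‖P‖) * ‖P‖) ^ 2 = ‖P‖ * φ' ‖P‖ := by
      rw [mul_pow, Real.sq_sqrt (div_nonneg hφP0 (norm_nonneg _))]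
      rcases eq_or_ne ‖P‖ 0 with h | h
      · rw [h]; simp [h0]
      · field_simp
    have hv2' : (Real.sqrt (φ' ‖Q‖ / ‖Q‖) * ‖Q‖) ^ 2 = ‖Q‖ * φ' ‖Q‖ := by
      rw [mul_pow, Real.sq_sqrt (div_nonneg hφQ0 (norm_nonneg _))]
      rcases eq_or_ne ‖Q‖ 0 with h | h
      · rw [h]; simp [h0]
      · field_simp
    obtain ⟨s1l, s1u, s2l, s2u⟩ := scalar_est φ' hmono h0 hpos c_uc C_uc hc hcC huc
      ‖P‖ ‖Q‖ (Real.sqrt (φ' ‖P‖ / ‖P‖) * ‖P‖) (Real.sqrt (φ' ‖Q‖ / ‖Q‖) * ‖Q‖)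
      (norm_nonneg _) hn
      (mul_nonneg (Real.sqrt_nonneg _) (norm_nonneg _))
      (mul_nonneg (Real.sqrt_nonneg _) (norm_nonneg _)) hu2' hv2'
    set u := Real.sqrt (φ' ‖P‖ / ‖P‖) * ‖P‖ with hu
    set v := Real.sqrt (φ' ‖Q‖ / ‖Q‖) * ‖Q‖ with hv
    have hy0 : (0:ℝ) ≤ ‖Q‖ := norm_nonneg _
    have hx0 : (0:ℝ) ≤ ‖P‖ := norm_nonneg _
    have hφP0 : 0 ≤ φ' ‖P‖ := by
      have := hmono (Set.mem_Ici.mpr le_rfl) (Set.mem_Ici.mpr hx0) hx0; linarith [h0.le, h0.ge]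
    have hφQ0 : 0 ≤ φ' ‖Q‖ := by
      have := hmono (Set.mem_Ici.mpr le_rfl) (Set.mem_Ici.mpr hy0) hy0; linarith [h0.le, h0.ge]
    set a := φ' ‖P‖ / ‖P‖ with ha
    set b := φ' ‖Q‖ / ‖Q‖ with hb
    have ha0 : 0 ≤ a := div_nonneg hφP0 hx0
    have hb0 : 0 ≤ b := div_nonneg hφQ0 hy0
    have hax1 : a * ‖P‖ = φ' ‖P‖ := by
      rcases eq_or_ne ‖P‖ 0 with h | h
      · rw [ha, h]; simp [h0]
      · rw [ha]; field_simp
    have hbx1 : b * ‖Q‖ = φ' ‖Q‖ := by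
      rcases eq_or_ne ‖Q‖ 0 with h | h
      · rw [hb, h]; simp [h0]
      · rw [hb]; field_simp
    have hax2 : a * ‖P‖ ^ 2 = ‖P‖ * φ' ‖P‖ := by rw [pow_two, ← mul_assoc, hax1]; ring
    have hbx2 : b * ‖Q‖ ^ 2 = ‖Q‖ * φ' ‖Q‖ := by rw [pow_two, ← mul_assoc, hbx1]; ring
    have hu2 : u ^ 2 = ‖P‖ * φ' ‖P‖ := by
      rw [hu, mul_pow, Real.sq_sqrt ha0, hax2]
    have hv2 : v ^ 2 = ‖Q‖ * φ' ‖Q‖ := by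
      rw [hv, mul_pow, Real.sq_sqrt hb0, hbx2]
    have e2 : (Real.sqrt a * Real.sqrt b) * (‖P‖ * ‖Q‖) = u * v := by rw [hu, hv]; ring
    have hI : (inner ℝ (A P - A Q) (P - Q) : ℝ)
        = a * ‖P‖ ^ 2 + b * ‖Q‖ ^ 2 - (a + b) * (inner ℝ P Q : ℝ) := by
      rw [hA, hA]
      simp only [inner_sub_left, inner_sub_right, real_inner_smul_left, real_inner_self_eq_norm_sq]
      rw [real_inner_comm Q P]; ring
    have hJ : ‖F P - F Q‖ ^ 2
        = a * ‖P‖ ^ 2 + b * ‖Q‖ ^ 2 - 2 * (Real.sqrt a * Real.sqrt b) * (inner ℝ P Q : ℝ) := by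
      rw [hF, hF, norm_sub_sq_real, norm_smul, norm_smul, real_inner_smul_left,
        real_inner_smul_right, Real.norm_eq_abs, Real.norm_eq_abs,
        abs_of_nonneg (Real.sqrt_nonneg a), abs_of_nonneg (Real.sqrt_nonneg b),
        mul_pow, mul_pow, Real.sq_sqrt ha0, Real.sq_sqrt hb0]
      ring
    have hθ1 : (inner ℝ P Q : ℝ) ≤ ‖P‖ * ‖Q‖ := real_inner_le_norm P Q
    have hθ2 : -(‖P‖ * ‖Q‖) ≤ (inner ℝ P Q : ℝ) := neg_le_of_abs_le (abs_real_inner_le_norm P Q)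
    set cm := min (c_uc / (1 + C_uc) ^ 2) (1/2 : ℝ) with hcm
    set CM := max (4 * C_uc) 3 with hCM
    constructor
    · rw [hI, hJ]
      have ep1 : ((cm - 1) * (a * ‖P‖ ^ 2 + b * ‖Q‖ ^ 2))
          + ((a + b) - 2 * cm * (Real.sqrt a * Real.sqrt b)) * (‖P‖ * ‖Q‖) ≤ 0 := by
        have expand : ((cm - 1) * (a * ‖P‖ ^ 2 + b * ‖Q‖ ^ 2))
            + ((a + b) - 2 * cm * (Real.sqrt a * Real.sqrt b)) * (‖P‖ * ‖Q‖)
            = cm * (u - v) ^ 2 - (‖P‖ - ‖Q‖) * (φ' ‖P‖ - φ' ‖Q‖) := by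
          linear_combination (cm - 1) * hax2 + (cm - 1) * hbx2 + ‖Q‖ * hax1 + ‖P‖ * hbx1
            - 2 * cm * e2 - cm * hu2 - cm * hv2
        rw [expand]; linarith [s1l]
      have ep2 : ((cm - 1) * (a * ‖P‖ ^ 2 + b * ‖Q‖ ^ 2))
          + ((a + b) - 2 * cm * (Real.sqrt a * Real.sqrt b)) * (-(‖P‖ * ‖Q‖)) ≤ 0 := by
        have expand : ((cm - 1) * (a * ‖P‖ ^ 2 + b * ‖Q‖ ^ 2))
            + ((a + b) - 2 * cm * (Real.sqrt a * Real.sqrt b)) * (-(‖P‖ * ‖Q‖))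
            = cm * (u + v) ^ 2 - (‖P‖ + ‖Q‖) * (φ' ‖P‖ + φ' ‖Q‖) := by
          linear_combination (cm - 1) * hax2 + (cm - 1) * hbx2 - ‖Q‖ * hax1 - ‖P‖ * hbx1
            + 2 * cm * e2 - cm * hu2 - cm * hv2
        rw [expand]; linarith [s2l]
      have := interp_aux' hθ1 hθ2 ep1 ep2
      linarith [this]
    · rw [hI, hJ]
      have ep1 : ((1 - CM) * (a * ‖P‖ ^ 2 + b * ‖Q‖ ^ 2))
          + (2 * CM * (Real.sqrt a * Real.sqrt b) - (a + b)) * (‖P‖ * ‖Q‖) ≤ 0 := by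
        have expand : ((1 - CM) * (a * ‖P‖ ^ 2 + b * ‖Q‖ ^ 2))
            + (2 * CM * (Real.sqrt a * Real.sqrt b) - (a + b)) * (‖P‖ * ‖Q‖)
            = (‖P‖ - ‖Q‖) * (φ' ‖P‖ - φ' ‖Q‖) - CM * (u - v) ^ 2 := by
          linear_combination (1 - CM) * hax2 + (1 - CM) * hbx2 - ‖Q‖ * hax1 - ‖P‖ * hbx1
            + 2 * CM * e2 + CM * hu2 + CM * hv2
        rw [expand]; linarith [s1u]
      have ep2 : ((1 - CM) * (a * ‖P‖ ^ 2 + b * ‖Q‖ ^ 2))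
          + (2 * CM * (Real.sqrt a * Real.sqrt b) - (a + b)) * (-(‖P‖ * ‖Q‖)) ≤ 0 := by
        have expand : ((1 - CM) * (a * ‖P‖ ^ 2 + b * ‖Q‖ ^ 2))
            + (2 * CM * (Real.sqrt a * Real.sqrt b) - (a + b)) * (-(‖P‖ * ‖Q‖))
            = (‖P‖ + ‖Q‖) * (φ' ‖P‖ + φ' ‖Q‖) - CM * (u + v) ^ 2 := by
          linear_combination (1 - CM) * hax2 + (1 - CM) * hbx2 + ‖Q‖ * hax1 + ‖P‖ * hbx1
            - 2 * CM * e2 + CM * hu2 + CM * hv2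
        rw [expand]; linarith [s2u]
      have := interp_aux' hθ1 hθ2 ep1 ep2
      linarith [this]
  refine ⟨min (c_uc / (1 + C_uc) ^ 2) (1/2), max (4 * C_uc) 3,
    lt_min (by positivity) (by norm_num), ?_, ?_⟩
  · calc min (c_uc / (1 + C_uc) ^ 2) (1/2 : ℝ) ≤ 1/2 := min_le_right _ _
      _ ≤ 3 := by norm_num
      _ ≤ max (4 * C_uc) 3 := le_max_right _ _
  · intro P Q
    rcases le_total ‖Q‖ ‖P‖ with h | h
    · exact main P Q h
    · obtain ⟨l, r⟩ := main Q P h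
      have eI : (inner ℝ (A Q - A P) (Q - P) : ℝ) = (inner ℝ (A P - A Q) (P - Q) : ℝ) := by
        rw [← neg_sub (A P) (A Q), ← neg_sub P Q, inner_neg_neg]
      have eF : ‖F Q - F P‖ = ‖F P - F Q‖ := norm_sub_rev _ _
      rw [eI, eF] at l r
      exact ⟨l, r⟩
end

section
/- Let φ be a uniformly convex N-function, A(Q) := (φ'(|Q|)/|Q|)·Q (A(0):=0), and let φ_{|Q|} denote the shifted N-function with density φ'_{|Q|}(s) = φ'(max{|Q|,s})·s/max{|Q|,s}. Then for all P, Q ∈ ℝ^d one has (A(P) − A(Q))·(P − Q) ≍ φ_{|Q|}(|P − Q|) with implicit constants depending only on the uniform convexity constants of φ. -/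
lemma my_delta2 (φ' : ℝ → ℝ) (hmono : MonotoneOn φ' (Set.Ici 0))
    (c_uc : ℝ) (hc : 0 < c_uc) (hc1 : c_uc ≤ 1)
    (huc1 : ∀ s > 0, ∀ t, 0 ≤ t → t < s →
      c_uc * ((φ' s - φ' t) / (s - t)) ≤ φ' s / s) :
    ∃ K : ℝ, 1 ≤ K ∧ ∀ s > 0, ∀ s', s ≤ s' → s' ≤ 2*s → φ' s' ≤ K * φ' s := by
  set l : ℝ := 2 / (2 - c_uc) with hl_def
  have h2c : (0:ℝ) < 2 - c_uc := by linarith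
  have hl1 : 1 < l := by
    rw [hl_def, lt_div_iff₀ h2c]; linarith
  have hl0 : 0 < l := by linarith
  have key : l - 1 = c_uc * l / 2 := by
    rw [hl_def]; field_simp; ring
  have step : ∀ s : ℝ, 0 < s → φ' (l * s) ≤ 2 * φ' s := by
    intro s hs
    have hls : 0 < l * s := mul_pos hl0 hs
    have hlt : s < l * s := by nlinarith
    have h := huc1 (l * s) hls s hs.le hlt
    rw [← mul_div_assoc, div_le_div_iff₀ (by linarith) hls] at h
    have key2 : l * s - s = c_uc * l / 2 * s := by rw [← key]; ring
    rw [key2] at h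
    nlinarith [mul_pos (mul_pos hc hl0) hs]
  have iter : ∀ n : ℕ, ∀ s : ℝ, 0 < s → φ' (l ^ n * s) ≤ 2 ^ n * φ' s := by
    intro n
    induction n with
    | zero => intro s hs; simp
    | succ n ih =>
        intro s hs
        have h1 : φ' (l ^ (n+1) * s) ≤ 2 ^ n * φ' (l * s) := by
          have := ih (l * s) (mul_pos hl0 hs)
          calc φ' (l ^ (n+1) * s) = φ' (l ^ n * (l * s)) := by ring_nf
            _ ≤ 2 ^ n * φ' (l * s) := this
        have h2 : φ' (l * s) ≤ 2 * φ' s := step s hs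
        have h2n : (0:ℝ) ≤ 2 ^ n := by positivity
        calc φ' (l ^ (n+1) * s) ≤ 2 ^ n * φ' (l * s) := h1
          _ ≤ 2 ^ n * (2 * φ' s) := by nlinarith
          _ = 2 ^ (n+1) * φ' s := by ring
  obtain ⟨n, hn⟩ := pow_unbounded_of_one_lt (2:ℝ) hl1
  refine ⟨2 ^ n, one_le_pow₀ (by norm_num : (1:ℝ) ≤ 2), ?_⟩
  intro s hs s' hss' hs2
  have hsub : s' ≤ l ^ n * s := by nlinarith
  have h1 : φ' s' ≤ φ' (l ^ n * s) := by
    refine hmono ?_ ?_ hsub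
    · exact Set.mem_Ici.mpr (by linarith)
    · exact Set.mem_Ici.mpr (by positivity)
  exact h1.trans (iter n s hs)


set_option maxHeartbeats 2000000 in
lemma my_core (φ' : ℝ → ℝ) (hmono : MonotoneOn φ' (Set.Ici 0)) (h0 : φ' 0 = 0)
    (c_uc C_uc : ℝ) (hc : 0 < c_uc) (hc1 : c_uc ≤ 1) (hC1 : 1 ≤ C_uc)
    (huc : ∀ s > 0, ∀ t, 0 ≤ t → t < s →
      c_uc * ((φ' s - φ' t) / (s - t)) ≤ φ' s / s ∧
      φ' s / s ≤ C_uc * ((φ' s - φ' t) / (s - t)))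
    (a b x cc : ℝ) (hb : 0 ≤ b) (hba : b ≤ a) (hx : 0 < x)
    (hcs : cc ≤ a * b) (hcs' : -(a * b) ≤ cc)
    (hxsq : x ^ 2 = a ^ 2 + b ^ 2 - 2 * cc) :
    φ' a / a * x ^ 2 ≤
      16 * C_uc * ((φ' a - φ' b) * (a - b) + (φ' a / a + φ' b / b) * (a * b - cc)) ∧
    (φ' a - φ' b) * (a - b) + (φ' a / a + φ' b / b) * (a * b - cc) ≤
      16 / c_uc * (φ' a / a * x ^ 2) := by
  have ha0 : 0 ≤ a := hb.trans hba
  have ha : 0 < a := by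
    rcases eq_or_lt_of_le ha0 with h | h
    · exfalso
      have hb0 : b = 0 := le_antisymm (hba.trans h.symm.le) hb
      have : x ^ 2 = 0 - 2*cc := by rw [hxsq, ← h, hb0]; ring
      nlinarith [pow_pos hx 2, hcs, hcs']
    · exact h
  set ga := φ' a / a with hga_def
  set gb := φ' b / b with hgb_def
  have mem0 : (0:ℝ) ∈ Set.Ici (0:ℝ) := Set.mem_Ici.mpr le_rfl
  have memb : b ∈ Set.Ici (0:ℝ) := Set.mem_Ici.mpr hb
  have mema : a ∈ Set.Ici (0:ℝ) := Set.mem_Ici.mpr ha0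
  have hφb0 : 0 ≤ φ' b := by have := hmono mem0 memb hb; rwa [h0] at this
  have hφab : φ' b ≤ φ' a := hmono memb mema hba
  have hφa0 : 0 ≤ φ' a := hφb0.trans hφab
  have hga0 : 0 ≤ ga := div_nonneg hφa0 ha0
  have hgb0 : 0 ≤ gb := div_nonneg hφb0 hb
  have hgaa : ga * a = φ' a := by rw [hga_def]; field_simp
  have hgbb : gb * b = φ' b := by
    rcases eq_or_lt_of_le hb with h | h
    · rw [hgb_def, ← h, h0]; simp
    · rw [hgb_def]; field_simp
  have habx : a - b ≤ x := by nlinarith [hcs, sq_nonneg (x - (a - b))]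
  have hxa : x ≤ 2 * a := by nlinarith [hcs', sq_nonneg (2*a - x)]
  -- key inequalities from uniform convexity
  have hK1 : c_uc * ((φ' a - φ' b) * (a - b)) ≤ ga * (a - b) ^ 2 := by
    rcases eq_or_lt_of_le hba with heq | hlt
    · rw [heq]; simp
    · have h1 := (huc a ha b hb hlt).1
      have hab : 0 < a - b := sub_pos.2 hlt
      have m1 := mul_le_mul_of_nonneg_right h1 hab.le
      rw [mul_assoc, div_mul_cancel₀ _ hab.ne'] at m1
      nlinarith [mul_le_mul_of_nonneg_right m1 hab.le]
  have hK2 : ga * (a - b) ^ 2 ≤ C_uc * ((φ' a - φ' b) * (a - b)) := by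
    rcases eq_or_lt_of_le hba with heq | hlt
    · rw [heq]; simp
    · have h2 := (huc a ha b hb hlt).2
      have hab : 0 < a - b := sub_pos.2 hlt
      have m2 := mul_le_mul_of_nonneg_right h2 hab.le
      rw [mul_assoc, div_mul_cancel₀ _ hab.ne'] at m2
      nlinarith [mul_le_mul_of_nonneg_right m2 hab.le]
  have habcc : 0 ≤ a * b - cc := sub_nonneg.2 hcs
  have hsum : 2 * (a * b - cc) = x ^ 2 - (a - b) ^ 2 := by linear_combination - hxsq
  have hT1 : 0 ≤ (φ' a - φ' b) * (a - b) :=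
    mul_nonneg (sub_nonneg.2 hφab) (sub_nonneg.2 hba)
  have hT2 : 0 ≤ (ga + gb) * (a * b - cc) := mul_nonneg (add_nonneg hga0 hgb0) habcc
  have hCuc0 : (0:ℝ) ≤ C_uc := by linarith
  constructor
  · -- lower bound : ga * x^2 ≤ 16 C_uc E
    rcases le_or_gt (a/2) b with hcase | hcase
    · rcases le_or_gt (x ^ 2) (2 * (a - b) ^ 2) with hsub | hsub
      · have p1 : ga * x ^ 2 ≤ 2 * (ga * (a - b) ^ 2) := by
          have := mul_nonneg hga0 (by linarith : (0:ℝ) ≤ 2*(a-b)^2 - x^2)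
          nlinarith [this]
        linarith [p1, hK2, mul_nonneg hCuc0 hT1, mul_nonneg hCuc0 hT2,
          mul_nonneg (by linarith : (0:ℝ) ≤ C_uc - 1) hT1]
      · have q1 : ga * x ^ 2 ≤ 4 * (ga * (a * b - cc)) := by
          have := mul_nonneg hga0 (by linarith : (0:ℝ) ≤ 4*(a*b - cc) - x^2)
          nlinarith [this]
        linarith [q1, mul_nonneg hgb0 habcc, mul_nonneg hCuc0 hT1,
          mul_nonneg (by linarith : (0:ℝ) ≤ C_uc - 1) hT2, hT2]
    · -- b < a/2
      have f1 : x ^ 2 ≤ 4 * a ^ 2 := by nlinarith [hxa, hx.le]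
      have f2 : a ^ 2 ≤ 4 * (a - b) ^ 2 := by
        nlinarith [mul_nonneg (by linarith : (0:ℝ) ≤ a - 2*b) (by linarith : (0:ℝ) ≤ 3*a - 2*b)]
      have r1 : ga * x ^ 2 ≤ 4 * (ga * a ^ 2) := by
        have := mul_nonneg hga0 (sub_nonneg.2 f1); nlinarith [this]
      have r2 : ga * a ^ 2 ≤ 4 * (ga * (a - b) ^ 2) := by
        have := mul_nonneg hga0 (sub_nonneg.2 f2); nlinarith [this]
      linarith [r1, r2, hK2, mul_nonneg hCuc0 hT2, mul_nonneg hCuc0 hT1,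
        mul_nonneg (by linarith : (0:ℝ) ≤ C_uc - 1) hT1]
  · -- upper bound
    rw [div_mul_eq_mul_div, le_div_iff₀ hc]
    rcases le_or_gt (a/2) b with hcase | hcase
    · have hb0 : 0 < b := lt_of_lt_of_le (by linarith) hcase
      have hgb2 : gb ≤ 2 * ga := by
        rw [hgb_def, hga_def, mul_div_assoc', div_le_div_iff₀ hb0 ha]
        linarith [mul_le_mul_of_nonneg_right hφab ha0,
          mul_nonneg hφa0 (by linarith : (0:ℝ) ≤ 2*b - a)]
      have s2 : gb * (a * b - cc) ≤ 2 * (ga * (a * b - cc)) :=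
        by linarith [mul_le_mul_of_nonneg_right hgb2 habcc]
      have t4 : 2 * (ga * (a * b - cc)) = ga * x ^ 2 - ga * (a - b) ^ 2 := by
        linear_combination ga * hsum
      linarith [hK1, s2, t4, mul_nonneg hga0 (sq_nonneg (a-b)),
        mul_nonneg hga0 (sq_nonneg x),
        mul_nonneg (by linarith : (0:ℝ) ≤ 1 - c_uc) hT1,
        mul_nonneg (by linarith : (0:ℝ) ≤ 1 - c_uc) hT2,
        mul_nonneg hga0 habcc, mul_nonneg hgb0 habcc]
    · -- b < a/2
      have e1 : (φ' a - φ' b) * (a - b) ≤ φ' a * a := by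
        linarith [mul_nonneg hφa0 hb, mul_nonneg hφb0 (sub_nonneg.2 hba)]
      have e2 : ga * (a * b - cc) ≤ φ' a * a := by
        linarith [mul_nonneg hga0 (by linarith : (0:ℝ) ≤ a*b + cc),
          mul_le_mul_of_nonneg_left hgaa.le hb,
          mul_le_mul_of_nonneg_left hgaa.ge hb,
          mul_nonneg hφa0 (by linarith : (0:ℝ) ≤ a - 2*b)]
      have e3 : gb * (a * b - cc) ≤ 2 * (φ' a * a) := by
        linarith [mul_nonneg hgb0 (by linarith : (0:ℝ) ≤ a*b + cc),
          mul_le_mul_of_nonneg_left hgbb.le ha0,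
          mul_le_mul_of_nonneg_left hgbb.ge ha0,
          mul_le_mul_of_nonneg_left hφab ha0]
      have e4 : φ' a * a = ga * a ^ 2 := by rw [← hgaa]; ring
      have hax : a ≤ 2 * x := by linarith
      have e5 : a ^ 2 ≤ 4 * x ^ 2 := by nlinarith [hax, ha0]
      linarith [e1, e2, e3, e4,
        mul_nonneg hga0 (by linarith : (0:ℝ) ≤ 4*x^2 - a^2),
        mul_nonneg (by linarith : (0:ℝ) ≤ 1 - c_uc) hT1,
        mul_nonneg (by linarith : (0:ℝ) ≤ 1 - c_uc) hT2]


set_option maxHeartbeats 1000000 in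
lemma my_shift (φ' : ℝ → ℝ) (hmono : MonotoneOn φ' (Set.Ici 0)) (h0 : φ' 0 = 0)
    (K : ℝ) (hK : 1 ≤ K)
    (hΔ2 : ∀ s > 0, ∀ s', s ≤ s' → s' ≤ 2*s → φ' s' ≤ K * φ' s)
    (b x : ℝ) (hb : 0 ≤ b) (hx : 0 < x) :
    φ' (max b x) / max b x * x ^ 2 ≤
        (4 * K) * ∫ s in (0:ℝ)..x, φ' (max b s) * s / max b s ∧
    (∫ s in (0:ℝ)..x, φ' (max b s) * s / max b s) ≤ φ' (max b x) / max b x * x ^ 2 := by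
  set h : ℝ → ℝ := fun s => φ' (max b s) * s / max b s with hh_def
  have hφnn : ∀ t, 0 ≤ t → 0 ≤ φ' t := by
    intro t ht
    have := hmono (Set.mem_Ici.mpr le_rfl) (Set.mem_Ici.mpr ht) ht
    rwa [h0] at this
  have hmono' : MonotoneOn h (Set.Icc 0 x) := by
    intro s hs s' hs' hss
    have hmax0 : (0:ℝ) ≤ max b s := le_trans hb (le_max_left _ _)
    have hmax0' : (0:ℝ) ≤ max b s' := le_trans hb (le_max_left _ _)
    have h1 : φ' (max b s) ≤ φ' (max b s') :=
      hmono (Set.mem_Ici.mpr hmax0) (Set.mem_Ici.mpr hmax0') (max_le_max le_rfl hss)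
    have h2 : s / max b s ≤ s' / max b s' := by
      rcases lt_or_ge s' b with hcase | hcase
      · rw [max_eq_left (le_of_lt (lt_of_le_of_lt hss hcase)), max_eq_left hcase.le]
        have hb0 : 0 < b := lt_of_le_of_lt hs'.1 hcase
        exact (div_le_div_iff_of_pos_right hb0).mpr hss
      · rw [max_eq_right hcase]
        rcases eq_or_lt_of_le hs'.1 with h' | h'
        · have hs0 : s = 0 := le_antisymm (hss.trans h'.symm.le) hs.1
          rw [hs0, ← h']; simp
        · rw [div_self h'.ne']
          exact div_le_one_of_le₀ (le_max_right _ _) hmax0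
    show φ' (max b s) * s / max b s ≤ φ' (max b s') * s' / max b s'
    rw [mul_div_assoc, mul_div_assoc]
    exact mul_le_mul h1 h2 (div_nonneg hs.1 hmax0) (hφnn _ hmax0')
  have hnn : ∀ s, 0 ≤ s → 0 ≤ h s := by
    intro s hs
    exact div_nonneg (mul_nonneg (hφnn _ (le_trans hb (le_max_left _ _))) hs)
      (le_trans hb (le_max_left _ _))
  have hint : IntervalIntegrable h MeasureTheory.volume 0 x := by
    apply MonotoneOn.intervalIntegrable
    rwa [Set.uIcc_of_le hx.le]
  have hupos : 0 < max b x := lt_of_lt_of_le hx (le_max_right _ _)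
  have hu'pos : 0 < max b (x/2) := lt_of_lt_of_le (half_pos hx) (le_max_right _ _)
  constructor
  · -- lower bound
    have hint1 : IntervalIntegrable h MeasureTheory.volume 0 (x/2) := by
      apply hint.mono_set
      rw [Set.uIcc_of_le (half_pos hx).le, Set.uIcc_of_le hx.le]
      exact Set.Icc_subset_Icc le_rfl (by linarith)
    have hint2 : IntervalIntegrable h MeasureTheory.volume (x/2) x := by
      apply hint.mono_set
      rw [Set.uIcc_of_le (by linarith : x/2 ≤ x), Set.uIcc_of_le hx.le]
      exact Set.Icc_subset_Icc (by linarith) le_rfl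
    have hsplit : (∫ s in (0:ℝ)..(x/2), h s) + ∫ s in (x/2)..x, h s = ∫ s in (0:ℝ)..x, h s :=
      intervalIntegral.integral_add_adjacent_intervals hint1 hint2
    have low1 : 0 ≤ ∫ s in (0:ℝ)..(x/2), h s :=
      intervalIntegral.integral_nonneg (by linarith) (fun s hs => hnn s hs.1)
    have hhalfmem : x/2 ∈ Set.Icc (0:ℝ) x := ⟨(half_pos hx).le, by linarith⟩
    have low2 : (x/2) * h (x/2) ≤ ∫ s in (x/2)..x, h s := by
      have := intervalIntegral.integral_mono_on (by linarith : x/2 ≤ x)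
        (intervalIntegrable_const (c := h (x/2))) hint2
        (fun s hs => hmono' hhalfmem ⟨le_trans (half_pos hx).le hs.1, hs.2⟩ hs.1)
      rwa [intervalIntegral.integral_const, smul_eq_mul, show x - x/2 = x/2 by ring] at this
    have key : φ' (max b x) ≤ K * φ' (max b (x/2)) := by
      apply hΔ2 (max b (x/2)) hu'pos
      · exact max_le_max le_rfl (by linarith)
      · exact max_le (by nlinarith [le_max_left b (x/2)]) (by nlinarith [le_max_right b (x/2)])
    have hgg : φ' (max b x) / max b x ≤ K * φ' (max b (x/2)) / max b (x/2) :=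
      div_le_div₀ (mul_nonneg (by linarith : (0:ℝ) ≤ K) (hφnn _ hu'pos.le)) key hu'pos
        (max_le_max le_rfl (by linarith))
    have hval : h (x/2) = φ' (max b (x/2)) * (x/2) / max b (x/2) := rfl
    have step : φ' (max b x) / max b x * x ^ 2 ≤ (4*K) * ((x/2) * h (x/2)) := by
      rw [hval]
      have hx2 : (0:ℝ) ≤ x ^ 2 := sq_nonneg x
      have := mul_le_mul_of_nonneg_right hgg hx2
      calc φ' (max b x) / max b x * x ^ 2
          ≤ K * φ' (max b (x/2)) / max b (x/2) * x ^ 2 := this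
        _ = (4*K) * ((x/2) * (φ' (max b (x/2)) * (x/2) / max b (x/2))) := by
            field_simp; ring
    refine step.trans ?_
    have hK0 : (0:ℝ) < 4*K := by linarith
    have : (x/2) * h (x/2) ≤ ∫ s in (0:ℝ)..x, h s := by
      rw [← hsplit]; linarith
    exact mul_le_mul_of_nonneg_left this hK0.le
  · -- upper bound
    have hle : ∀ s ∈ Set.Icc (0:ℝ) x, h s ≤ h x :=
      fun s hs => hmono' hs ⟨hx.le, le_rfl⟩ hs.2
    have := intervalIntegral.integral_mono_on hx.le hint
      (intervalIntegrable_const (c := h x)) hle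
    rw [intervalIntegral.integral_const, smul_eq_mul, sub_zero] at this
    refine this.trans (le_of_eq ?_)
    show x * (φ' (max b x) * x / max b x) = _
    field_simp

set_option maxHeartbeats 2000000 in


/-- Equivalence (A(P) − A(Q))·(P − Q) ≍ φ_{|Q|}(|P − Q|) for a uniformly convex
N-function φ and its shifted N-functions. -/
theorem A_shifted_distance_equivalence
    (d : ℕ)
    (φ φ' : ℝ → ℝ)
    (hrep : ∀ t ≥ 0, φ t = ∫ s in (0:ℝ)..t, φ' s)
    (hmono : MonotoneOn φ' (Set.Ici 0))
    (hrc : ∀ t ≥ 0, ContinuousWithinAt φ' (Set.Ici t) t)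
    (h0 : φ' 0 = 0)
    (hpos : ∀ t > 0, φ' t > 0)
    (hinf : Filter.Tendsto φ' Filter.atTop Filter.atTop)
    (c_uc C_uc : ℝ) (hc : 0 < c_uc) (hcC : c_uc ≤ C_uc)
    (huc : ∀ s > 0, ∀ t, 0 ≤ t → t < s →
      c_uc * ((φ' s - φ' t) / (s - t)) ≤ φ' s / s ∧
      φ' s / s ≤ C_uc * ((φ' s - φ' t) / (s - t)))
    (A : EuclideanSpace ℝ (Fin d) → EuclideanSpace ℝ (Fin d))
    (hA : ∀ Q, A Q = (φ' ‖Q‖ / ‖Q‖) • Q)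
    (φshift : ℝ → ℝ → ℝ)
    (hφshift : ∀ r ≥ 0, ∀ t ≥ 0,
      φshift r t = ∫ s in (0:ℝ)..t, φ' (max r s) * s / max r s) :
    ∃ c C : ℝ, 0 < c ∧ c ≤ C ∧
      ∀ P Q : EuclideanSpace ℝ (Fin d),
        c * (inner ℝ (A P - A Q) (P - Q) : ℝ) ≤ φshift ‖Q‖ ‖P - Q‖ ∧
        φshift ‖Q‖ ‖P - Q‖ ≤ C * (inner ℝ (A P - A Q) (P - Q) : ℝ) := by
  have hp1 : 0 < φ' 1 := hpos 1 one_pos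
  have huc10 := huc 1 one_pos 0 le_rfl one_pos
  have hc1 : c_uc ≤ 1 := by
    have h := huc10.1
    rw [h0] at h
    simp only [sub_zero, div_one] at h
    nlinarith [h, hp1]
  have hC1 : 1 ≤ C_uc := by
    have h := huc10.2
    rw [h0] at h
    simp only [sub_zero, div_one] at h
    nlinarith [h, hp1]
  obtain ⟨K, hK1, hΔ2⟩ := my_delta2 φ' hmono c_uc hc hc1
    (fun s hs t ht hts => (huc s hs t ht hts).1)
  have hK0 : (0:ℝ) < K := by linarith
  have hφnn : ∀ t, 0 ≤ t → 0 ≤ φ' t := by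
    intro t ht
    have := hmono (Set.mem_Ici.mpr le_rfl) (Set.mem_Ici.mpr ht) ht
    rwa [h0] at this
  refine ⟨c_uc / (128 * K ^ 2), 32 * K * C_uc, by positivity, ?_, ?_⟩
  · have h1 : c_uc / (128 * K ^ 2) ≤ 1 := by
      rw [div_le_one (by positivity)]
      nlinarith [sq_nonneg K]
    nlinarith [h1, hK1, hC1]
  intro P Q
  set a : ℝ := ‖P‖ with ha_def
  set b : ℝ := ‖Q‖ with hb_def
  set x : ℝ := ‖P - Q‖ with hx_def
  set cc : ℝ := (inner ℝ P Q : ℝ) with hcc_def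
  have ha0 : 0 ≤ a := norm_nonneg P
  have hb0 : 0 ≤ b := norm_nonneg Q
  have hx0 : 0 ≤ x := norm_nonneg (P - Q)
  -- the basic identity
  have hgaa : φ' a / a * a = φ' a := by
    rcases eq_or_lt_of_le ha0 with h | h
    · rw [← h, h0]; simp
    · field_simp
  have hgbb : φ' b / b * b = φ' b := by
    rcases eq_or_lt_of_le hb0 with h | h
    · rw [← h, h0]; simp
    · field_simp
  have hI : (inner ℝ (A P - A Q) (P - Q) : ℝ) =
      (φ' a - φ' b) * (a - b) + (φ' a / a + φ' b / b) * (a * b - cc) := by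
    have e1 : (inner ℝ (A P - A Q) (P - Q) : ℝ)
        = (φ' a / a) * (inner ℝ P (P - Q) : ℝ) - (φ' b / b) * (inner ℝ Q (P - Q) : ℝ) := by
      rw [hA P, hA Q, inner_sub_left, real_inner_smul_left, real_inner_smul_left]
    have h2 : (inner ℝ Q P : ℝ) = cc := by rw [real_inner_comm]
    rw [e1, inner_sub_right, inner_sub_right, real_inner_self_eq_norm_sq,
      real_inner_self_eq_norm_sq, real_inner_comm Q P]
    linear_combination (a - b) * hgaa + (b - a) * hgbb - (φ' a / a + φ' b / b) * h2
  have hcs : cc ≤ a * b := real_inner_le_norm P Q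
  have hcs' : -(a * b) ≤ cc := (abs_le.1 (abs_real_inner_le_norm P Q)).1
  have hxsq : x ^ 2 = a ^ 2 + b ^ 2 - 2 * cc := by
    rw [hx_def, norm_sub_sq_real, ← ha_def, ← hb_def, ← hcc_def]; ring
  rcases eq_or_lt_of_le hx0 with hxz | hxz
  · -- P = Q
    have hPQ : P = Q := by
      have h : ‖P - Q‖ = 0 := hxz.symm
      rwa [norm_eq_zero, sub_eq_zero] at h
    have hz1 : (inner ℝ (A P - A Q) (P - Q) : ℝ) = 0 := by
      rw [hPQ]; simp
    have hz2 : φshift ‖Q‖ ‖P - Q‖ = 0 := by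
      rw [hPQ]
      simp only [sub_self, norm_zero]
      rw [hφshift ‖Q‖ (norm_nonneg Q) 0 le_rfl, intervalIntegral.integral_same]
    rw [hz1, hz2]
    norm_num
  · -- main case
    set m : ℝ := max a b with hm_def
    have hcore : φ' m / m * x ^ 2 ≤ 16 * C_uc * (inner ℝ (A P - A Q) (P - Q) : ℝ) ∧
        (inner ℝ (A P - A Q) (P - Q) : ℝ) ≤ 16 / c_uc * (φ' m / m * x ^ 2) := by
      rcases le_total b a with hba | hab
      · have hm : m = a := max_eq_left hba
        have hc2 := my_core φ' hmono h0 c_uc C_uc hc hc1 hC1 huc a b x cc hb0 hba hxz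
          hcs hcs' hxsq
        rw [hm, hI]
        exact hc2
      · have hm : m = b := max_eq_right hab
        have hc2 := my_core φ' hmono h0 c_uc C_uc hc hc1 hC1 huc b a x cc ha0 hab hxz
          (by rw [mul_comm]; exact hcs) (by rw [mul_comm]; exact hcs')
          (by rw [hxsq]; ring)
        have hE : (φ' a - φ' b) * (a - b) + (φ' a / a + φ' b / b) * (a * b - cc)
            = (φ' b - φ' a) * (b - a) + (φ' b / b + φ' a / a) * (b * a - cc) := by ring
        rw [hm, hI, hE]
        exact hc2
    set u : ℝ := max b x with hu_def
    have hmpos : 0 < m := by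
      have h1 : x ≤ a + b := norm_sub_le P Q
      have h2 : a ≤ m := le_max_left _ _
      have h3 : b ≤ m := le_max_right _ _
      linarith
    have hupos : 0 < u := lt_of_lt_of_le hxz (le_max_right _ _)
    have hu2m : u ≤ 2 * m := by
      have h1 : x ≤ a + b := norm_sub_le P Q
      have h2 : a ≤ m := le_max_left _ _
      have h3 : b ≤ m := le_max_right _ _
      exact max_le (by linarith) (by linarith)
    have hm2u : m ≤ 2 * u := by
      have h3 : b ≤ u := le_max_left _ _
      have h4 : x ≤ u := le_max_right _ _
      rcases le_or_gt a (2 * b) with hcase | hcase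
      · exact max_le (by linarith) (by linarith)
      · have h5 : a - b ≤ x := by
          have h6 := norm_sub_norm_le P Q
          rw [← ha_def, ← hb_def, ← hx_def] at h6
          exact h6
        exact max_le (by linarith) (by linarith)
    -- comparison of φ'(t)/t at comparable points
    have gstep : ∀ s t : ℝ, 0 < s → 0 < t → t ≤ 2 * s → s ≤ 2 * t →
        φ' t / t ≤ 2 * K * (φ' s / s) := by
      intro s t hs ht ht2 hs2
      have hφs : 0 ≤ φ' s := hφnn s hs.le
      have hφt : 0 ≤ φ' t := hφnn t ht.le
      rw [mul_div_assoc' (2*K), div_le_div_iff₀ ht hs]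
      rcases le_total t s with hts | hst
      · have hm1 : φ' t ≤ φ' s := hmono (Set.mem_Ici.mpr ht.le) (Set.mem_Ici.mpr hs.le) hts
        nlinarith [mul_nonneg (sub_nonneg.2 hm1) hs.le,
          mul_nonneg hφs (by linarith : (0:ℝ) ≤ 2*t - s),
          mul_nonneg (mul_nonneg (by linarith : (0:ℝ) ≤ K - 1) hφs) ht.le]
      · have hm1 : φ' t ≤ K * φ' s := hΔ2 s hs t hst ht2
        nlinarith [mul_nonneg (sub_nonneg.2 hm1) hs.le,
          mul_nonneg (mul_nonneg hK0.le hφs) (by linarith : (0:ℝ) ≤ t - s),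
          mul_nonneg (mul_nonneg hK0.le hφs) ht.le]
    have gum : φ' u / u ≤ 2 * K * (φ' m / m) := gstep m u hmpos hupos hu2m hm2u
    have gmu : φ' m / m ≤ 2 * K * (φ' u / u) := gstep u m hupos hmpos hm2u hu2m
    have hS := my_shift φ' hmono h0 K hK1 hΔ2 b x hb0 hxz
    have hSdef : φshift ‖Q‖ ‖P - Q‖ = ∫ s in (0:ℝ)..x, φ' (max b s) * s / max b s :=
      hφshift b hb0 x hx0
    have hgm0 : 0 ≤ φ' m / m := div_nonneg (hφnn m hmpos.le) hmpos.le
    have hgu0 : 0 ≤ φ' u / u := div_nonneg (hφnn u hupos.le) hupos.le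
    constructor
    · -- c * I ≤ φshift
      rw [hSdef]
      have step2 : φ' m / m * x ^ 2 ≤ 2 * K * (φ' u / u * x ^ 2) := by
        nlinarith [mul_le_mul_of_nonneg_right gmu (sq_nonneg x)]
      have chain : (inner ℝ (A P - A Q) (P - Q) : ℝ)
          ≤ 16 / c_uc * (2 * K * ((4 * K) * ∫ s in (0:ℝ)..x, φ' (max b s) * s / max b s)) := by
        refine hcore.2.trans ?_
        have h16 : (0:ℝ) ≤ 16 / c_uc := by positivity
        refine mul_le_mul_of_nonneg_left ?_ h16
        refine step2.trans ?_
        exact mul_le_mul_of_nonneg_left hS.1 (by linarith)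
      have heq : c_uc / (128 * K ^ 2) *
          (16 / c_uc * (2 * K * ((4 * K) * ∫ s in (0:ℝ)..x, φ' (max b s) * s / max b s)))
          = ∫ s in (0:ℝ)..x, φ' (max b s) * s / max b s := by
        field_simp
        ring
      calc c_uc / (128 * K ^ 2) * (inner ℝ (A P - A Q) (P - Q) : ℝ)
          ≤ c_uc / (128 * K ^ 2) *
            (16 / c_uc * (2 * K * ((4 * K) * ∫ s in (0:ℝ)..x, φ' (max b s) * s / max b s))) :=
            mul_le_mul_of_nonneg_left chain (by positivity)
        _ = _ := heq
    · -- φshift ≤ C * I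
      rw [hSdef]
      calc (∫ s in (0:ℝ)..x, φ' (max b s) * s / max b s)
          ≤ φ' u / u * x ^ 2 := hS.2
        _ ≤ 2 * K * (φ' m / m * x ^ 2) := by
            nlinarith [mul_le_mul_of_nonneg_right gum (sq_nonneg x)]
        _ ≤ 2 * K * (16 * C_uc * (inner ℝ (A P - A Q) (P - Q) : ℝ)) :=
            mul_le_mul_of_nonneg_left hcore.1 (by linarith)
        _ = 32 * K * C_uc * (inner ℝ (A P - A Q) (P - Q) : ℝ) := by ring
end

section
/- Let φ be a uniformly convex N-function satisfying the Δ₂ condition, and let φ_r be the shifted N-function for shift r ≥ 0. Then for all P, Q ∈ ℝ^d with r = |Q| one has the equivalence φ'_{|Q|}(|P−Q|) ≍ φ'(|P−Q| + |Q|)·|P−Q| / (|P−Q| + |Q|), and consequently φ_{|Q|}(|P−Q|) ≍ φ'(|P−Q| + |Q|)·|P−Q|² / (|P−Q| + |Q|), with implicit constants depending only on the uniform convexity constants of φ. -/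
open MeasureTheory intervalIntegral

set_option maxHeartbeats 2000000 in
/-- Barrett–Liu quasi-norm equivalence: φ'_{|Q|}(|P−Q|) ≍ φ'(|P−Q|+|Q|)·|P−Q|/(|P−Q|+|Q|)
and φ_{|Q|}(|P−Q|) ≍ φ'(|P−Q|+|Q|)·|P−Q|²/(|P−Q|+|Q|). -/
theorem shifted_quasinorm_equivalence
    (d : ℕ)
    (φ φ' : ℝ → ℝ)
    (hrep : ∀ t ≥ 0, φ t = ∫ s in (0:ℝ)..t, φ' s)
    (hmono : MonotoneOn φ' (Set.Ici 0))
    (hrc : ∀ t ≥ 0, ContinuousWithinAt φ' (Set.Ici t) t)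
    (h0 : φ' 0 = 0)
    (hpos : ∀ t > 0, φ' t > 0)
    (hinf : Filter.Tendsto φ' Filter.atTop Filter.atTop)
    (c_uc C_uc : ℝ) (hc : 0 < c_uc) (hcC : c_uc ≤ C_uc)
    (huc : ∀ s > 0, ∀ t, 0 ≤ t → t < s →
      c_uc * ((φ' s - φ' t) / (s - t)) ≤ φ' s / s ∧
      φ' s / s ≤ C_uc * ((φ' s - φ' t) / (s - t)))
    (Δ₂ : ℝ)
    (hΔ₂ : ∀ t ≥ 0, φ (2 * t) ≤ Δ₂ * φ t)
    (φshift : ℝ → ℝ → ℝ)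
    (hφshift : ∀ r ≥ 0, ∀ t ≥ 0,
      φshift r t = ∫ s in (0:ℝ)..t, φ' (max r s) * s / max r s) :
    ∃ c C : ℝ, 0 < c ∧ c ≤ C ∧
      ∀ P Q : EuclideanSpace ℝ (Fin d),
        (c * (φ' (‖P - Q‖ + ‖Q‖) * ‖P - Q‖ / (‖P - Q‖ + ‖Q‖))
            ≤ φ' (max ‖Q‖ ‖P - Q‖) * ‖P - Q‖ / max ‖Q‖ ‖P - Q‖ ∧
          φ' (max ‖Q‖ ‖P - Q‖) * ‖P - Q‖ / max ‖Q‖ ‖P - Q‖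
            ≤ C * (φ' (‖P - Q‖ + ‖Q‖) * ‖P - Q‖ / (‖P - Q‖ + ‖Q‖))) ∧
        (c * (φ' (‖P - Q‖ + ‖Q‖) * ‖P - Q‖ ^ 2 / (‖P - Q‖ + ‖Q‖))
            ≤ φshift ‖Q‖ ‖P - Q‖ ∧
          φshift ‖Q‖ ‖P - Q‖
            ≤ C * (φ' (‖P - Q‖ + ‖Q‖) * ‖P - Q‖ ^ 2 / (‖P - Q‖ + ‖Q‖))) := by
  -- nonnegativity of φ'
  have hφ'0 : ∀ s, 0 ≤ s → 0 ≤ φ' s := by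
    intro s hs
    have := hmono (Set.mem_Ici.2 le_rfl) (Set.mem_Ici.2 hs) hs
    rwa [h0] at this
  -- integrability of φ'
  have hIntOn : ∀ a b : ℝ, 0 ≤ a → a ≤ b → IntervalIntegrable φ' volume a b := by
    intro a b ha hab
    apply MonotoneOn.intervalIntegrable
    apply hmono.mono
    rw [Set.uIcc_of_le hab]
    exact fun x hx => le_trans ha hx.1
  -- lower bound for φ via constant minorant on [a,b]
  have hlow : ∀ a b : ℝ, 0 ≤ a → a ≤ b → (b - a) * φ' a ≤ φ b := by
    intro a b ha hab
    have hb : 0 ≤ b := ha.trans hab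
    rw [hrep b hb]
    have h1 : (∫ s in (0:ℝ)..a, φ' s) + ∫ s in a..b, φ' s = ∫ s in (0:ℝ)..b, φ' s :=
      integral_add_adjacent_intervals (hIntOn 0 a le_rfl ha) (hIntOn a b ha hab)
    have h2 : 0 ≤ ∫ s in (0:ℝ)..a, φ' s :=
      intervalIntegral.integral_nonneg ha (fun u hu => hφ'0 u hu.1)
    have h3 : (b - a) * φ' a ≤ ∫ s in a..b, φ' s := by
      have : (∫ _ in a..b, φ' a) ≤ ∫ s in a..b, φ' s := by
        apply intervalIntegral.integral_mono_on hab intervalIntegrable_const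
          (hIntOn a b ha hab)
        exact fun x hx => hmono (Set.mem_Ici.2 ha) (Set.mem_Ici.2 (ha.trans hx.1)) hx.1
      rwa [intervalIntegral.integral_const, smul_eq_mul] at this
    linarith
  -- upper bound φ s ≤ s * φ' s
  have hupp : ∀ s : ℝ, 0 ≤ s → φ s ≤ s * φ' s := by
    intro s hs
    rw [hrep s hs]
    have : (∫ u in (0:ℝ)..s, φ' u) ≤ ∫ _ in (0:ℝ)..s, φ' s := by
      apply intervalIntegral.integral_mono_on hs (hIntOn 0 s le_rfl hs)
        intervalIntegrable_const
      exact fun x hx => hmono (Set.mem_Ici.2 hx.1) (Set.mem_Ici.2 hs) hx.2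
    rwa [intervalIntegral.integral_const, smul_eq_mul, sub_zero] at this
  -- φ monotone
  have hφmono : ∀ a b : ℝ, 0 ≤ a → a ≤ b → φ a ≤ φ b := by
    intro a b ha hab
    have hb : 0 ≤ b := ha.trans hab
    rw [hrep a ha, hrep b hb]
    have h1 : (∫ s in (0:ℝ)..a, φ' s) + ∫ s in a..b, φ' s = ∫ s in (0:ℝ)..b, φ' s :=
      integral_add_adjacent_intervals (hIntOn 0 a le_rfl ha) (hIntOn a b ha hab)
    have h2 : 0 ≤ ∫ s in a..b, φ' s :=
      intervalIntegral.integral_nonneg hab (fun u hu => hφ'0 u (ha.trans hu.1))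
    linarith
  -- Δ₂ ≥ 1
  have hΔ1 : 1 ≤ Δ₂ := by
    have hφ1 : 0 < φ 1 := by
      have := hlow (1/2) 1 (by norm_num) (by norm_num)
      have hp := hpos (1/2) (by norm_num)
      nlinarith
    have h12 : φ 1 ≤ φ 2 := hφmono 1 2 zero_le_one one_le_two
    have h2 := hΔ₂ 1 zero_le_one
    norm_num at h2
    nlinarith
  have hΔpos : 0 < Δ₂ := lt_of_lt_of_le one_pos hΔ1
  -- doubling of φ'
  have hdbl : ∀ s : ℝ, 0 < s → φ' (2 * s) ≤ Δ₂ ^ 2 * φ' s := by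
    intro s hs
    have h1 := hlow (2 * s) (3 * s) (by linarith) (by linarith)
    rw [show (3 * s - 2 * s) = s by ring] at h1
    have h2 : φ (3 * s) ≤ φ (4 * s) := hφmono _ _ (by linarith) (by linarith)
    have h3 := hΔ₂ (2 * s) (by linarith)
    rw [show (2 * (2 * s)) = 4 * s by ring] at h3
    have h4 := hΔ₂ s hs.le
    have h5 := hupp s hs.le
    have h6 : s * φ' (2 * s) ≤ Δ₂ ^ 2 * (s * φ' s) := by nlinarith
    nlinarith [hφ'0 s hs.le]
  -- monotone shifted integrand
  have gmono : ∀ r : ℝ, 0 ≤ r →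
      MonotoneOn (fun s => φ' (max r s) * s / max r s) (Set.Ici 0) := by
    intro r hr a ha b hb hab
    simp only [Set.mem_Ici] at ha hb
    have hma : (0:ℝ) ≤ max r a := le_trans ha (le_max_right r a)
    have hmb : (0:ℝ) ≤ max r b := le_trans hb (le_max_right r b)
    have h1 : a / max r a ≤ b / max r b := by
      rcases le_or_gt b r with hbr | hbr
      · rw [max_eq_left hbr, max_eq_left (hab.trans hbr)]
        rcases eq_or_lt_of_le hr with hr0 | hr0
        · have hb0 : b = 0 := le_antisymm (hbr.trans hr0.symm.le) hb
          have ha0 : a = 0 := le_antisymm (hab.trans hb0.le) ha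
          simp [ha0, hb0]
        · gcongr
      · have hb0 : 0 < b := lt_of_le_of_lt hr hbr
        rw [max_eq_right hbr.le, div_self (ne_of_gt hb0)]
        exact div_le_one_of_le₀ (le_max_right r a) hma
    have h2 : φ' (max r a) ≤ φ' (max r b) :=
      hmono (Set.mem_Ici.2 hma) (Set.mem_Ici.2 hmb) (max_le_max le_rfl hab)
    calc φ' (max r a) * a / max r a = φ' (max r a) * (a / max r a) := mul_div_assoc _ _ _
      _ ≤ φ' (max r b) * (b / max r b) :=
          mul_le_mul h2 h1 (div_nonneg ha hma) (hφ'0 _ hmb)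
      _ = φ' (max r b) * b / max r b := (mul_div_assoc _ _ _).symm
  -- integrability and nonnegativity of the shifted integrand
  have gInt : ∀ r : ℝ, 0 ≤ r → ∀ a b : ℝ, 0 ≤ a → a ≤ b →
      IntervalIntegrable (fun s => φ' (max r s) * s / max r s) volume a b := by
    intro r hr a b ha hab
    apply MonotoneOn.intervalIntegrable
    apply (gmono r hr).mono
    rw [Set.uIcc_of_le hab]
    exact fun x hx => le_trans ha hx.1
  have gnn : ∀ r s : ℝ, 0 ≤ s → 0 ≤ φ' (max r s) * s / max r s := by
    intro r s hs
    have hms : (0:ℝ) ≤ max r s := le_trans hs (le_max_right r s)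
    exact div_nonneg (mul_nonneg (hφ'0 _ hms) hs) hms
  refine ⟨1 / (4 * Δ₂ ^ 4), 2, by positivity, ?_, ?_⟩
  · have h4 : 1 ≤ Δ₂ ^ 4 := one_le_pow₀ hΔ1
    rw [div_le_iff₀ (by positivity)]
    nlinarith
  intro P Q
  set t := ‖P - Q‖ with hts
  set r := ‖Q‖ with hrs
  have ht : 0 ≤ t := norm_nonneg _
  have hr : 0 ≤ r := norm_nonneg _
  rcases eq_or_lt_of_le ht with ht0 | ht0
  · have h00 : φshift r 0 = 0 := by
      rw [hφshift r hr 0 le_rfl, intervalIntegral.integral_same]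
    simp [← ht0, h00]
  have hm : 0 < max r t := lt_of_lt_of_le ht0 (le_max_right r t)
  have hS : 0 < t + r := by linarith
  have hrm : r ≤ max r t := le_max_left r t
  have htm : t ≤ max r t := le_max_right r t
  have hmS : max r t ≤ t + r := max_le (by linarith) (by linarith)
  have hS2m : t + r ≤ 2 * max r t := by linarith
  have hmono1 : φ' (max r t) ≤ φ' (t + r) :=
    hmono (Set.mem_Ici.2 hm.le) (Set.mem_Ici.2 hS.le) hmS
  have hkey : φ' (t + r) ≤ Δ₂ ^ 2 * φ' (max r t) := by
    have h1 : φ' (t + r) ≤ φ' (2 * max r t) :=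
      hmono (Set.mem_Ici.2 hS.le) (Set.mem_Ici.2 (by linarith)) hS2m
    have h2 := hdbl (max r t) hm
    linarith
  have hφ'm : 0 ≤ φ' (max r t) := hφ'0 _ hm.le
  have hφ'S : 0 ≤ φ' (t + r) := hφ'0 _ hS.le
  have hi_low : 1 / (4 * Δ₂ ^ 4) * (φ' (t + r) * t / (t + r)) ≤ φ' (max r t) * t / max r t := by
    rw [show 1 / (4 * Δ₂ ^ 4) * (φ' (t + r) * t / (t + r))
          = (φ' (t + r) * t) / (4 * Δ₂ ^ 4 * (t + r)) by
        rw [div_mul_div_comm, one_mul],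
        div_le_div_iff₀ (by positivity) hm]
    have hd24 : Δ₂ ^ 2 ≤ 4 * Δ₂ ^ 4 := by nlinarith [one_le_pow₀ hΔ1 (n := 2)]
    nlinarith [mul_le_mul_of_nonneg_right hkey (mul_nonneg ht hm.le),
      mul_le_mul_of_nonneg_left hmS (mul_nonneg (mul_nonneg (sq_nonneg Δ₂) hφ'm) ht),
      mul_le_mul_of_nonneg_right hd24
        (mul_nonneg (mul_nonneg hφ'm ht) hS.le)]
  have hi_upp : φ' (max r t) * t / max r t ≤ 2 * (φ' (t + r) * t / (t + r)) := by
    rw [show 2 * (φ' (t + r) * t / (t + r)) = (2 * φ' (t + r) * t) / (t + r) by ring,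
        div_le_div_iff₀ hm hS]
    nlinarith [mul_le_mul_of_nonneg_right hmono1 (mul_nonneg ht hS.le),
      mul_le_mul_of_nonneg_left hS2m (mul_nonneg hφ'S ht)]
  have hsh : φshift r t = ∫ s in (0:ℝ)..t, φ' (max r s) * s / max r s := hφshift r hr t ht
  have hub : φshift r t ≤ t * (φ' (max r t) * t / max r t) := by
    rw [hsh]
    have h1 : (∫ s in (0:ℝ)..t, φ' (max r s) * s / max r s)
        ≤ ∫ _ in (0:ℝ)..t, φ' (max r t) * t / max r t := by
      apply intervalIntegral.integral_mono_on ht (gInt r hr 0 t le_rfl ht)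
        intervalIntegrable_const
      exact fun x hx => gmono r hr (Set.mem_Ici.2 hx.1) (Set.mem_Ici.2 ht) hx.2
    rwa [intervalIntegral.integral_const, smul_eq_mul, sub_zero] at h1
  have hlb : t / 2 * (φ' (max r (t/2)) * (t/2) / max r (t/2)) ≤ φshift r t := by
    rw [hsh]
    have hsplit : (∫ s in (0:ℝ)..(t/2), φ' (max r s) * s / max r s)
        + (∫ s in (t/2)..t, φ' (max r s) * s / max r s)
        = ∫ s in (0:ℝ)..t, φ' (max r s) * s / max r s :=
      integral_add_adjacent_intervals (gInt r hr 0 (t/2) le_rfl (by linarith))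
        (gInt r hr (t/2) t (by linarith) (by linarith))
    have h1 : 0 ≤ ∫ s in (0:ℝ)..(t/2), φ' (max r s) * s / max r s :=
      intervalIntegral.integral_nonneg (by linarith) (fun u hu => gnn r u hu.1)
    have h2 : (t - t/2) * (φ' (max r (t/2)) * (t/2) / max r (t/2))
        ≤ ∫ s in (t/2)..t, φ' (max r s) * s / max r s := by
      have h3 : (∫ _ in (t/2)..t, φ' (max r (t/2)) * (t/2) / max r (t/2))
          ≤ ∫ s in (t/2)..t, φ' (max r s) * s / max r s := by
        apply intervalIntegral.integral_mono_on (by linarith) intervalIntegrable_const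
          (gInt r hr (t/2) t (by linarith) (by linarith))
        exact fun x hx => gmono r hr (Set.mem_Ici.2 (by linarith))
          (Set.mem_Ici.2 (le_trans (by linarith) hx.1)) hx.1
      rwa [intervalIntegral.integral_const, smul_eq_mul] at h3
    rw [show t - t/2 = t/2 by ring] at h2
    linarith
  have hm'pos : 0 < max r (t/2) := lt_of_lt_of_le (by linarith) (le_max_right r (t/2))
  have hφ'm' : 0 ≤ φ' (max r (t/2)) := hφ'0 _ hm'pos.le
  have hm'S : max r (t/2) ≤ t + r := max_le (by linarith) (by linarith)
  have hS4 : t + r ≤ 4 * max r (t/2) := by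
    have h1 : r ≤ max r (t/2) := le_max_left _ _
    have h2 : t/2 ≤ max r (t/2) := le_max_right _ _
    linarith
  have hkey4 : φ' (t + r) ≤ Δ₂ ^ 4 * φ' (max r (t/2)) := by
    have ha : φ' (t + r) ≤ φ' (4 * max r (t/2)) :=
      hmono (Set.mem_Ici.2 hS.le) (Set.mem_Ici.2 (by positivity)) hS4
    have hb := hdbl (2 * max r (t/2)) (by positivity)
    rw [show 2 * (2 * max r (t/2)) = 4 * max r (t/2) by ring] at hb
    have hcc := hdbl (max r (t/2)) hm'pos
    have hd := mul_le_mul_of_nonneg_left hcc (sq_nonneg Δ₂)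
    linarith
  have hii_low : 1 / (4 * Δ₂ ^ 4) * (φ' (t + r) * t ^ 2 / (t + r)) ≤ φshift r t := by
    refine le_trans ?_ hlb
    rw [show t / 2 * (φ' (max r (t/2)) * (t/2) / max r (t/2))
          = (φ' (max r (t/2)) * t ^ 2) / (4 * max r (t/2)) by ring,
        show 1 / (4 * Δ₂ ^ 4) * (φ' (t + r) * t ^ 2 / (t + r))
          = (φ' (t + r) * t ^ 2) / (4 * Δ₂ ^ 4 * (t + r)) by
        rw [div_mul_div_comm, one_mul],
        div_le_div_iff₀ (by positivity) (by positivity)]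
    linarith [mul_le_mul_of_nonneg_right hkey4 (mul_nonneg (sq_nonneg t) hm'pos.le),
      mul_le_mul_of_nonneg_left hm'S
        (mul_nonneg (mul_nonneg (by positivity : (0:ℝ) ≤ Δ₂ ^ 4) hφ'm') (sq_nonneg t))]
  have hii_upp : φshift r t ≤ 2 * (φ' (t + r) * t ^ 2 / (t + r)) := by
    refine le_trans hub ?_
    rw [show t * (φ' (max r t) * t / max r t) = (φ' (max r t) * t ^ 2) / max r t by ring,
        show 2 * (φ' (t + r) * t ^ 2 / (t + r)) = (2 * φ' (t + r) * t ^ 2) / (t + r) by ring,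
        div_le_div_iff₀ hm hS]
    nlinarith [mul_le_mul_of_nonneg_right hmono1 (mul_nonneg (sq_nonneg t) hS.le),
      mul_le_mul_of_nonneg_left hS2m (mul_nonneg hφ'S (sq_nonneg t))]
  exact ⟨⟨hi_low, hi_upp⟩, hii_low, hii_upp⟩
end
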